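/- arXiv:2211.04270 — 4 statements merged into one kernel-verified Lean document; each statement's English description precedes it below -/
import Mathlib

section
/- Let κ be a field, A a commutative κ-algebra, U, K, H ∈ A, S ∈ A invertible, and scalars α, β, δ_V, φ, ψ, τ, z, w ∈ κ with α, β invertible. Assume: (i) the skein relation S − S⁻¹ = z·(1 − U) + w·(H − K); (ii) the relations U² = δ_V·U, U·K = 0, U·H = φ·U, U·S = α³·U, U·S⁻¹ = α⁻³·U, K² = ψ·K, K·H = τ·K, K·S = β·K, K·S⁻¹ = β⁻¹·K; (iii) U ≠ 0 and K ≠ 0; and (iv) (τ − ψ)·δ_V + φ + ψ − τ ≠ 0. Then z = ((β − β⁻¹)·φ + (α³ − α⁻³)·(ψ − τ)) / ((τ − ψ)·δ_V + φ + ψ − τ) and w = ((β − β⁻¹)·(δ_V − 1) + (α³ − α⁻³)) / ((τ − ψ)·δ_V + φ + ψ − τ). -/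
/-!
Multiplying the skein relation by `U` turns every term into a scalar multiple of `U`, and
likewise for `K`; since `U` and `K` are nonzero vectors over the field `κ`, comparing
coefficients gives two linear equations in `z` and `w`:
`α³ - α⁻³ = z (1 - δ_V) + w φ` and `β - β⁻¹ = z + w (τ - ψ)`.
Their determinant is `(τ - ψ) δ_V + φ + ψ - τ`, and Cramer's rule gives the formulas.
-/

lemma skein_system_solution {κ : Type*} [Field κ] {a b z w δV φ ψ τ : κ}
    (hU : a = z * (1 - δV) + w * φ) (hK : b = z + w * (τ - ψ))
    (hden : (τ - ψ) * δV + φ + ψ - τ ≠ 0) :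
    z = (b * φ + a * (ψ - τ)) / ((τ - ψ) * δV + φ + ψ - τ) ∧
      w = (b * (δV - 1) + a) / ((τ - ψ) * δV + φ + ψ - τ) := by
  constructor <;> rw [eq_div_iff hden]
  · linear_combination (τ - ψ) * hU - φ * hK
  · linear_combination (1 - δV) * hK - hU

theorem skein_coefficients_general (κ : Type*) [Field κ] (A : Type*) [CommRing A] [Algebra κ A]
    (U K H S Sinv : A)
    (α β δV φ ψ τ z w : κ)
    (hskein : S - Sinv = z • ((1 : A) - U) + w • (H - K))
    (hUU : U * U = δV • U) (hUK : U * K = 0)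
    (hUH : U * H = φ • U) (hUS : U * S = (α ^ 3) • U) (hUSinv : U * Sinv = (α⁻¹ ^ 3) • U)
    (hKK : K * K = ψ • K) (hKH : K * H = τ • K)
    (hKS : K * S = β • K) (hKSinv : K * Sinv = β⁻¹ • K)
    (hU : U ≠ 0) (hK : K ≠ 0)
    (hden : (τ - ψ) * δV + φ + ψ - τ ≠ 0) :
    z = ((β - β⁻¹) * φ + (α ^ 3 - α⁻¹ ^ 3) * (ψ - τ)) / ((τ - ψ) * δV + φ + ψ - τ) ∧
      w = ((β - β⁻¹) * (δV - 1) + (α ^ 3 - α⁻¹ ^ 3)) / ((τ - ψ) * δV + φ + ψ - τ) := by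
  have hKU : K * U = 0 := by rw [mul_comm, hUK]
  have eigenU : (α ^ 3 - α⁻¹ ^ 3) • U = (z * (1 - δV) + w * φ) • U :=
    calc (α ^ 3 - α⁻¹ ^ 3) • U = U * (S - Sinv) := by rw [mul_sub, hUS, hUSinv, sub_smul]
      _ = U * (z • (1 - U) + w • (H - K)) := by rw [hskein]
      _ = _ := by
        simp only [mul_add, mul_smul_comm, mul_sub, mul_one, hUU, hUH, hUK]
        module
  have eigenK : (β - β⁻¹) • K = (z + w * (τ - ψ)) • K :=
    calc (β - β⁻¹) • K = K * (S - Sinv) := by rw [mul_sub, hKS, hKSinv, sub_smul]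
      _ = K * (z • (1 - U) + w • (H - K)) := by rw [hskein]
      _ = _ := by
        simp only [mul_add, mul_smul_comm, mul_sub, mul_one, hKU, hKH, hKK]
        module
  exact skein_system_solution (smul_left_injective κ hU eigenU)
    (smul_left_injective κ hK eigenK) hden

/-- the skein coefficients `z` and `w` of the two-point algebra `A(2)`
are determined by the parameters `α, β, δ_V, φ, ψ, τ`. -/
theorem skein_coefficients (κ : Type*) [Field κ] (A : Type*) [CommRing A] [Algebra κ A]
    (U K H S Sinv : A) (hS : S * Sinv = 1)
    (α β δV φ ψ τ z w : κ) (hα : α ≠ 0) (hβ : β ≠ 0)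
    (hskein : S - Sinv = z • ((1 : A) - U) + w • (H - K))
    (hUU : U * U = δV • U) (hUK : U * K = 0)
    (hUH : U * H = φ • U) (hUS : U * S = (α ^ 3) • U) (hUSinv : U * Sinv = (α⁻¹ ^ 3) • U)
    (hKK : K * K = ψ • K) (hKH : K * H = τ • K)
    (hKS : K * S = β • K) (hKSinv : K * Sinv = β⁻¹ • K)
    (hU : U ≠ 0) (hK : K ≠ 0)
    (hden : (τ - ψ) * δV + φ + ψ - τ ≠ 0) :
    z = ((β - β⁻¹) * φ + (α ^ 3 - α⁻¹ ^ 3) * (ψ - τ)) / ((τ - ψ) * δV + φ + ψ - τ) ∧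
      w = ((β - β⁻¹) * (δV - 1) + (α ^ 3 - α⁻¹ ^ 3)) / ((τ - ψ) * δV + φ + ψ - τ) :=
  skein_coefficients_general κ A U K H S Sinv α β δV φ ψ τ z w hskein hUU hUK hUH hUS hUSinv hKK hKH
    hKS hKSinv hU hK hden
end

section
/- Let κ be a field, A a commutative κ-algebra, U, K, H ∈ A, S ∈ A invertible, and α, β, γ ∈ κ invertible. Define X_h := γ⁻¹·S·H and X_v := γ·S⁻¹·H. Assume the relations S⁻¹·U = α⁻³·U and S⁻¹·K = β⁻¹·K, assume {1, U, K, H, S} is κ-linearly independent in A, and assume there is a κ-linear map Rot : A → A with Rot(1) = U, Rot(U) = 1, Rot(K) = H, Rot(H) = K, Rot(S⁻¹) = S, and Rot(X_v) = X_h. Suppose X_h = a_I·1 + a_U·U + a_K·K + a_H·H + a_S·S for scalars a_I, a_U, a_K, a_H, a_S ∈ κ. Then: a_H·a_K = 1, a_H² = −β⁻¹·γ·a_K, a_H·a_I = −α⁻³·γ·a_U, a_H·a_U = −γ·a_S, and a_H·a_S = −γ·a_I. Consequently a_H³ = −β⁻¹·γ, and if moreover β = α³·γ⁻² and a_H = −α⁻¹·γ,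 then a_K = −α·γ⁻¹, a_U = α²·a_I, and a_S = α·a_I. -/
/-!
Multiplying `X_h = γ⁻¹ S H` by `S⁻¹` expresses `H` in the basis `S⁻¹, U, K, X_v, 1` with the
coefficients of `X_h` twisted by the eigenvalues of `S⁻¹`. Applying `Rot` turns this into an
expression of `K` through `S, 1, H, X_h, U`; substituting the expansion of `X_h` once more writes
`K` in the basis `{1, U, K, H, S}`, and comparing coefficients gives the five quadratic relations.
-/

theorem LinearIndependent.coeffs_eq_of_eq_five {R M : Type*} [Ring R] [AddCommGroup M]
    [Module R M] {v₀ v₁ v₂ v₃ v₄ : M} (hv : LinearIndependent R ![v₀, v₁, v₂, v₃, v₄])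
    {a₀ a₁ a₂ a₃ a₄ b₀ b₁ b₂ b₃ b₄ : R}
    (h : a₀ • v₀ + a₁ • v₁ + a₂ • v₂ + a₃ • v₃ + a₄ • v₄ =
      b₀ • v₀ + b₁ • v₁ + b₂ • v₂ + b₃ • v₃ + b₄ • v₄) :
    a₀ = b₀ ∧ a₁ = b₁ ∧ a₂ = b₂ ∧ a₃ = b₃ ∧ a₄ = b₄ := by
  have := hv.eq_coords_of_eq (f := ![a₀, a₁, a₂, a₃, a₄]) (g := ![b₀, b₁, b₂, b₃, b₄])
    (by simpa [Fin.sum_univ_five] using h)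
  exact ⟨this 0, this 1, this 2, this 3, this 4⟩

theorem eq_smul_add_of_smul_mul_eq {κ A : Type*} [Field κ] [CommRing A] [Algebra κ A]
    {U K H S Sinv Xv : A} {γ μ ν aI aU aK aH aS : κ} (hS : S * Sinv = 1) (hγ : γ ≠ 0)
    (hXv : Xv = γ • (Sinv * H)) (hSinvU : Sinv * U = μ • U) (hSinvK : Sinv * K = ν • K)
    (hexp : γ⁻¹ • (S * H) = aI • (1 : A) + aU • U + aK • K + aH • H + aS • S) :
    H = (γ * aI) • Sinv + (γ * μ * aU) • U + (γ * ν * aK) • K + aH • Xv + (γ * aS) • (1 : A) := by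
  have hγA : algebraMap κ A γ * algebraMap κ A γ⁻¹ = 1 := by
    rw [← map_mul, mul_inv_cancel₀ hγ, map_one]
  simp only [Algebra.smul_def, map_mul] at *
  -- multiply `hexp` by `γ S⁻¹`
  linear_combination (algebraMap κ A γ * Sinv) * hexp - algebraMap κ A aH * hXv
    + (algebraMap κ A γ * algebraMap κ A aU) * hSinvU
    + (algebraMap κ A γ * algebraMap κ A aK) * hSinvK
    + (algebraMap κ A γ * algebraMap κ A aS - H * algebraMap κ A γ * algebraMap κ A γ⁻¹) * hS
    - H * hγA

theorem coeffs_eq_of_mul_eq_neg_inv_mul {κ : Type*} [Field κ] {α γ aI aU aK aS : κ}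
    (hα : α ≠ 0) (hγ : γ ≠ 0) (hK : -α⁻¹ * γ * aK = 1)
    (hI : -α⁻¹ * γ * aI = -(α⁻¹ ^ 3) * γ * aU) (hU : -α⁻¹ * γ * aU = -γ * aS) :
    aK = -α * γ⁻¹ ∧ aU = α ^ 2 * aI ∧ aS = α * aI := by
  have hU' : aU = α ^ 2 * aI := by
    field_simp at hI
    linear_combination hI
  refine ⟨?_, hU', ?_⟩
  · field_simp at hK ⊢
    linear_combination -hK
  · rw [hU'] at hU
    field_simp at hU
    linear_combination hU

theorem HS_relation_general (κ : Type*) [Field κ] (A : Type*) [CommRing A] [Algebra κ A]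
    (U K H S Sinv : A) (hS : S * Sinv = 1)
    (α β γ : κ) (hα : α ≠ 0) (hγ : γ ≠ 0)
    (Xh Xv : A) (hXh : Xh = γ⁻¹ • (S * H)) (hXv : Xv = γ • (Sinv * H))
    (hSinvU : Sinv * U = (α⁻¹ ^ 3) • U) (hSinvK : Sinv * K = β⁻¹ • K)
    (hli : LinearIndependent κ ![1, U, K, H, S])
    (Rot : A →ₗ[κ] A)
    (hR1 : Rot 1 = U) (hRU : Rot U = 1) (hRK : Rot K = H) (hRH : Rot H = K)
    (hRSinv : Rot Sinv = S) (hRXv : Rot Xv = Xh)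
    (aI aU aK aH aS : κ)
    (hexp : Xh = aI • (1 : A) + aU • U + aK • K + aH • H + aS • S) :
    aH * aK = 1 ∧ aH ^ 2 = -β⁻¹ * γ * aK ∧ aH * aI = -(α⁻¹ ^ 3) * γ * aU ∧
      aH * aU = -γ * aS ∧ aH * aS = -γ * aI ∧ aH ^ 3 = -β⁻¹ * γ ∧
      (β = α ^ 3 * γ⁻¹ ^ 2 → aH = -α⁻¹ * γ →
        aK = -α * γ⁻¹ ∧ aU = α ^ 2 * aI ∧ aS = α * aI) := by
  have hH := eq_smul_add_of_smul_mul_eq hS hγ hXv hSinvU hSinvK (hXh ▸ hexp)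
  have hK : K = (γ * aI) • S + (γ * α⁻¹ ^ 3 * aU) • (1 : A) + (γ * β⁻¹ * aK) • H
      + aH • Xh + (γ * aS) • U := by
    simpa [hRSinv, hRU, hRK, hRXv, hR1, hRH] using congrArg Rot hH
  have hK_coords : (0 : κ) • (1 : A) + (0 : κ) • U + (1 : κ) • K + (0 : κ) • H + (0 : κ) • S =
      (γ * α⁻¹ ^ 3 * aU + aH * aI) • (1 : A) + (γ * aS + aH * aU) • U + (aH * aK) • K
        + (γ * β⁻¹ * aK + aH * aH) • H + (γ * aI + aH * aS) • S := by
    linear_combination (norm := module) hK + aH • hexp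
  obtain ⟨e1, eU, eK, eH, eS⟩ := hli.coeffs_eq_of_eq_five hK_coords
  have hKH : aH * aK = 1 := eK.symm
  have hHH : aH ^ 2 = -β⁻¹ * γ * aK := by linear_combination -eH
  have hHI : aH * aI = -(α⁻¹ ^ 3) * γ * aU := by linear_combination -e1
  have hHU : aH * aU = -γ * aS := by linear_combination -eU
  refine ⟨hKH, hHH, hHI, hHU, by linear_combination -eS,
    by linear_combination aH * hHH - β⁻¹ * γ * hKH, fun _ haH => ?_⟩
  subst haH
  exact coeffs_eq_of_mul_eq_neg_inv_mul hα hγ hKH hHI hHU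

/-- the HS relation in the two-point algebra `A(2)`: the coefficients of the
dotted crossing `X_h` in the basis `{1, U, K, H, S}` satisfy the displayed equations. -/
theorem HS_relation (κ : Type*) [Field κ] (A : Type*) [CommRing A] [Algebra κ A]
    (U K H S Sinv : A) (hS : S * Sinv = 1)
    (α β γ : κ) (hα : α ≠ 0) (hβ : β ≠ 0) (hγ : γ ≠ 0)
    (Xh Xv : A) (hXh : Xh = γ⁻¹ • (S * H)) (hXv : Xv = γ • (Sinv * H))
    (hSinvU : Sinv * U = (α⁻¹ ^ 3) • U) (hSinvK : Sinv * K = β⁻¹ • K)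
    (hli : LinearIndependent κ ![1, U, K, H, S])
    (Rot : A →ₗ[κ] A)
    (hR1 : Rot 1 = U) (hRU : Rot U = 1) (hRK : Rot K = H) (hRH : Rot H = K)
    (hRSinv : Rot Sinv = S) (hRXv : Rot Xv = Xh)
    (aI aU aK aH aS : κ)
    (hexp : Xh = aI • (1 : A) + aU • U + aK • K + aH • H + aS • S) :
    aH * aK = 1 ∧ aH ^ 2 = -β⁻¹ * γ * aK ∧ aH * aI = -(α⁻¹ ^ 3) * γ * aU ∧
      aH * aU = -γ * aS ∧ aH * aS = -γ * aI ∧ aH ^ 3 = -β⁻¹ * γ ∧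
      (β = α ^ 3 * γ⁻¹ ^ 2 → aH = -α⁻¹ * γ →
        aK = -α * γ⁻¹ ∧ aU = α ^ 2 * aI ∧ aS = α * aI) :=
  HS_relation_general κ A U K H S Sinv hS α β γ hα hγ Xh Xv hXh hXv hSinvU hSinvK hli Rot hR1 hRU
    hRK hRH hRSinv hRXv aI aU aK aH aS hexp
end

section
/- Let κ be a field, A a commutative κ-algebra, U, K, H ∈ A, S ∈ A invertible, and α, β, γ, δ_V, φ, ψ, τ, z, w ∈ κ with α, β, γ invertible. Define X_h := γ⁻¹·S·H and X_v := γ·S⁻¹·H. Assume the relations U² = δ_V·U, U·K = 0, U·H = φ·U, U·S = α³·U, U·S⁻¹ = α⁻³·U, K² = ψ·K, K·H = τ·K, K·S = β·K, K·S⁻¹ = β⁻¹·K; assume U ≠ 0 and K ≠ 0; and assume the identity X_h − X_v = (α⁻¹ − α + z)·(1 − U) + (α⁻¹·γ − α·γ⁻¹ + w)·(H − K). Then the scalar equations (α³·γ⁻¹ − α⁻³·γ)·φ = (α⁻¹ − α + z)·(1 − δ_V) + (α⁻¹·γ − α·γ⁻¹ + w)·φ and (β·γ⁻¹ − β⁻¹·γ)·τ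 = (α⁻¹ − α + z) + (α⁻¹·γ − α·γ⁻¹ + w)·(τ − ψ) hold in κ. -/
/-!
Left multiplication by `U` (resp. `K`) turns every generator into a scalar multiple of `U`
(resp. `K`): `U` and `K` are common left eigenvectors of `S`, `S⁻¹`, `H`, `U` and `K`.
Multiplying the skein relation on the left by such a nonzero eigenvector therefore gives an
equation `a • e = b • e`, and comparing coefficients yields one scalar equation for each of
`U` and `K`.
-/

section LeftEigen

variable {κ A : Type*} [Field κ] [Ring A] [Algebra κ A]

theorem mul_smul_mul_eq_of_mul_eq_smul {e x y : A} {a b : κ} (hx : e * x = a • e)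
    (hy : e * y = b • e) (c : κ) : e * (c • (x * y)) = (c * a * b) • e := by
  rw [mul_smul_comm, ← mul_assoc, hx, smul_mul_assoc, hy, smul_smul, smul_smul]

theorem skein_scalar_eq_of_mul_eq_smul {e S Sinv H U K : A} {γ p q s s' t u k : κ}
    (he : e ≠ 0) (hS : e * S = s • e) (hSinv : e * Sinv = s' • e) (hH : e * H = t • e)
    (hU : e * U = u • e) (hK : e * K = k • e)
    (hrel : γ⁻¹ • (S * H) - γ • (Sinv * H) = p • (1 - U) + q • (H - K)) :
    (γ⁻¹ * s - γ * s') * t = p * (1 - u) + q * (t - k) := by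
  refine smul_left_injective κ he ?_
  calc ((γ⁻¹ * s - γ * s') * t) • e
      = e * (γ⁻¹ • (S * H)) - e * (γ • (Sinv * H)) := by
        rw [mul_smul_mul_eq_of_mul_eq_smul hS hH, mul_smul_mul_eq_of_mul_eq_smul hSinv hH]
        module
    _ = e * (p • (1 - U) + q • (H - K)) := by rw [← mul_sub, hrel]
    _ = (p * (1 - u) + q * (t - k)) • e := by
        simp only [mul_add, mul_smul_comm, mul_sub, mul_one, hU, hH, hK]
        module

end LeftEigen

theorem skein_variant_scalar_equations_general (κ : Type*) [Field κ] (A : Type*) [CommRing A]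
    [Algebra κ A]
    (U K H S Sinv : A)
    (α β γ δV φ ψ τ z w : κ)
    (Xh Xv : A) (hXh : Xh = γ⁻¹ • (S * H)) (hXv : Xv = γ • (Sinv * H))
    (hUU : U * U = δV • U) (hUK : U * K = 0)
    (hUH : U * H = φ • U) (hUS : U * S = (α ^ 3) • U) (hUSinv : U * Sinv = (α⁻¹ ^ 3) • U)
    (hKK : K * K = ψ • K) (hKH : K * H = τ • K)
    (hKS : K * S = β • K) (hKSinv : K * Sinv = β⁻¹ • K)
    (hU : U ≠ 0) (hK : K ≠ 0)
    (hvar : Xh - Xv = (α⁻¹ - α + z) • ((1 : A) - U) + (α⁻¹ * γ - α * γ⁻¹ + w) • (H - K)) :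
    (α ^ 3 * γ⁻¹ - α⁻¹ ^ 3 * γ) * φ
        = (α⁻¹ - α + z) * (1 - δV) + (α⁻¹ * γ - α * γ⁻¹ + w) * φ ∧
      (β * γ⁻¹ - β⁻¹ * γ) * τ
        = (α⁻¹ - α + z) + (α⁻¹ * γ - α * γ⁻¹ + w) * (τ - ψ) := by
  subst hXh hXv
  have hKU : K * U = (0 : κ) • K := by rw [mul_comm, hUK, zero_smul]
  rw [← zero_smul κ U] at hUK
  constructor
  · linear_combination skein_scalar_eq_of_mul_eq_smul hU hUS hUSinv hUH hUU hUK hvar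
  · linear_combination skein_scalar_eq_of_mul_eq_smul hK hKS hKSinv hKH hKU hKK hvar

/-- multiplying the variant skein relation by `U` and by `K` gives two
scalar equations among the parameters. -/
theorem skein_variant_scalar_equations (κ : Type*) [Field κ] (A : Type*) [CommRing A]
    [Algebra κ A]
    (U K H S Sinv : A) (hS : S * Sinv = 1)
    (α β γ δV φ ψ τ z w : κ) (hα : α ≠ 0) (hβ : β ≠ 0) (hγ : γ ≠ 0)
    (Xh Xv : A) (hXh : Xh = γ⁻¹ • (S * H)) (hXv : Xv = γ • (Sinv * H))
    (hUU : U * U = δV • U) (hUK : U * K = 0)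
    (hUH : U * H = φ • U) (hUS : U * S = (α ^ 3) • U) (hUSinv : U * Sinv = (α⁻¹ ^ 3) • U)
    (hKK : K * K = ψ • K) (hKH : K * H = τ • K)
    (hKS : K * S = β • K) (hKSinv : K * Sinv = β⁻¹ • K)
    (hU : U ≠ 0) (hK : K ≠ 0)
    (hvar : Xh - Xv = (α⁻¹ - α + z) • ((1 : A) - U) + (α⁻¹ * γ - α * γ⁻¹ + w) • (H - K)) :
    (α ^ 3 * γ⁻¹ - α⁻¹ ^ 3 * γ) * φ
        = (α⁻¹ - α + z) * (1 - δV) + (α⁻¹ * γ - α * γ⁻¹ + w) * φ ∧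
      (β * γ⁻¹ - β⁻¹ * γ) * τ
        = (α⁻¹ - α + z) + (α⁻¹ * γ - α * γ⁻¹ + w) * (τ - ψ) :=
  skein_variant_scalar_equations_general κ A U K H S Sinv α β γ δV φ ψ τ z w Xh Xv hXh hXv hUU hUK
    hUH hUS hUSinv hKK hKH hKS hKSinv hU hK hvar
end

section
/- Let F = ℚ(t, u, v) be the field of rational functions in three variables t, u, v over ℚ, and for integers a, b, c set [a,b,c] := t^a·u^b·v^c − t^{-a}·u^{-b}·v^{-c} ∈ F. Define δ_V := −([2,2,2]·[1,2,1]·[4,2,4]·[2,3,3]·[3,3,2]) / ([1,1,1]·[2,4,2]·[2,1,2]·[1,0,0]·[0,0,1]), δ_W := ([3,3,0]·[2,2,1]·[1,2,0]·[2,2,2]·[3,3,3]·[2,3,2]·[2,3,3]·[1,2,1]·[4,2,4]·[4,2,2]) / ([0,0,2]·[0,0,1]·[1,0,-1]·[1,0,0]·[1,1,0]·[2,4,0]·[1,1,1]·[2,4,2]·[2,1,2]·[2,1,1]), ψ := ([1,0,-1]·[0,0,2]·[1,1,0]·[3,3,2]·[2,4,0]·[1,2,1]) / ([1,0,0]·[0,0,1]·[3,3,0]·[2,2,1]·[1,2,0]·[2,4,2]),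 and φ := −([3,3,3]·[2,3,2]·[1,2,1]·[4,2,2]) / ([0,0,1]·[1,0,0]·[2,4,2]·[2,1,1]). Then φ·δ_V = ψ·δ_W in F. -/
noncomputable section

/-- The field `ℚ(t, u, v)` of rational functions in three variables over `ℚ`. -/
abbrev F3 : Type := FractionRing (MvPolynomial (Fin 3) ℚ)

/-- The variable `t`. -/
def tF : F3 := algebraMap (MvPolynomial (Fin 3) ℚ) F3 (MvPolynomial.X 0)
/-- The variable `u`. -/
def uF : F3 := algebraMap (MvPolynomial (Fin 3) ℚ) F3 (MvPolynomial.X 1)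
/-- The variable `v`. -/
def vF : F3 := algebraMap (MvPolynomial (Fin 3) ℚ) F3 (MvPolynomial.X 2)

/-- The three-variable quantum bracket `[a,b,c] = tᵃuᵇvᶜ − t⁻ᵃu⁻ᵇv⁻ᶜ`. -/
def br (a b c : ℤ) : F3 :=
  tF ^ a * uF ^ b * vF ^ c - tF ^ (-a) * uF ^ (-b) * vF ^ (-c)

/-- The quantum dimension `δ_V`. -/
def deltaV : F3 :=
  -(br 2 2 2 * br 1 2 1 * br 4 2 4 * br 2 3 3 * br 3 3 2) /
    (br 1 1 1 * br 2 4 2 * br 2 1 2 * br 1 0 0 * br 0 0 1)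

/-- The quantum dimension `δ_W`. -/
def deltaW : F3 :=
  (br 3 3 0 * br 2 2 1 * br 1 2 0 * br 2 2 2 * br 3 3 3 * br 2 3 2 *
      br 2 3 3 * br 1 2 1 * br 4 2 4 * br 4 2 2) /
    (br 0 0 2 * br 0 0 1 * br 1 0 (-1) * br 1 0 0 * br 1 1 0 * br 2 4 0 *
      br 1 1 1 * br 2 4 2 * br 2 1 2 * br 2 1 1)

/-- The bigon coefficient `ψ`. -/
def psiF : F3 :=
  (br 1 0 (-1) * br 0 0 2 * br 1 1 0 * br 3 3 2 * br 2 4 0 * br 1 2 1) /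
    (br 1 0 0 * br 0 0 1 * br 3 3 0 * br 2 2 1 * br 1 2 0 * br 2 4 2)

/-- The bigon coefficient `φ`. -/
def phiF : F3 :=
  -(br 3 3 3 * br 2 3 2 * br 1 2 1 * br 4 2 2) /
    (br 0 0 1 * br 1 0 0 * br 2 4 2 * br 2 1 1)

/-
Cross-multiplied, the identity holds formally in the brackets: `ψ·δ_W` is `φ·δ_V` with numerator
and denominator both multiplied by `[1,0,-1][0,0,2][1,1,0][2,4,0][3,3,0][2,2,1][1,2,0]`. What is
left is that no bracket in a denominator vanishes, and `[a,b,c] = 0` forces `t^{2a}u^{2b}v^{2c} = 1`,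
hence `a = b = c = 0`, since monomials with different exponents are different in `ℚ[t,u,v]`.
-/

open MvPolynomial

lemma X_pow_mul_X_pow_mul_X_pow_inj {R : Type*} [CommSemiring R] [Nontrivial R]
    {p₀ p₁ p₂ q₀ q₁ q₂ : ℕ} :
    (X 0 ^ p₀ * X 1 ^ p₁ * X 2 ^ p₂ : MvPolynomial (Fin 3) R) = X 0 ^ q₀ * X 1 ^ q₁ * X 2 ^ q₂ ↔
      p₀ = q₀ ∧ p₁ = q₁ ∧ p₂ = q₂ := by
  refine ⟨fun h => ?_, by rintro ⟨rfl, rfl, rfl⟩; rfl⟩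
  simp only [X_pow_eq_monomial, monomial_mul, one_mul] at h
  have hs := monomial_left_injective one_ne_zero h
  exact ⟨by simpa using DFunLike.congr_fun hs 0, by simpa using DFunLike.congr_fun hs 1,
    by simpa using DFunLike.congr_fun hs 2⟩

lemma algebraMap_X_ne_zero (i : Fin 3) : algebraMap (MvPolynomial (Fin 3) ℚ) F3 (X i) ≠ 0 :=
  (map_ne_zero_iff _ (IsFractionRing.injective _ _)).2 (X_ne_zero i)

lemma tF_ne_zero : tF ≠ 0 := algebraMap_X_ne_zero 0

lemma uF_ne_zero : uF ≠ 0 := algebraMap_X_ne_zero 1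

lemma vF_ne_zero : vF ≠ 0 := algebraMap_X_ne_zero 2

lemma eq_zero_of_tF_zpow_mul_uF_zpow_mul_vF_zpow_eq_one {a b c : ℤ}
    (h : tF ^ a * uF ^ b * vF ^ c = 1) : a = 0 ∧ b = 0 ∧ c = 0 := by
  rw [← Int.toNat_sub_toNat_neg a, ← Int.toNat_sub_toNat_neg b, ← Int.toNat_sub_toNat_neg c,
    zpow_sub₀ tF_ne_zero, zpow_sub₀ uF_ne_zero, zpow_sub₀ vF_ne_zero] at h
  simp only [zpow_natCast] at h
  field_simp [tF_ne_zero, uF_ne_zero, vF_ne_zero] at h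
  simp only [tF, uF, vF, ← map_pow, ← map_mul] at h
  obtain ⟨h₀, h₁, h₂⟩ := X_pow_mul_X_pow_mul_X_pow_inj.1 (IsFractionRing.injective _ _ h)
  omega

lemma br_eq_zero_iff {a b c : ℤ} : br a b c = 0 ↔ a = 0 ∧ b = 0 ∧ c = 0 := by
  refine ⟨fun h => ?_, fun ⟨ha, hb, hc⟩ => by simp [br, ha, hb, hc]⟩
  have hmon : tF ^ (2 * a) * uF ^ (2 * b) * vF ^ (2 * c) = 1 := by
    rw [br, sub_eq_zero] at h
    simp only [zpow_neg] at h
    field_simp [tF_ne_zero, uF_ne_zero, vF_ne_zero] at h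
    simpa [zpow_mul'] using h
  obtain ⟨ha, hb, hc⟩ := eq_zero_of_tF_zpow_mul_uF_zpow_mul_vF_zpow_eq_one hmon
  omega

/-- the compatibility `φ·δ_V = ψ·δ_W` in `ℚ(t,u,v)`. -/
theorem phi_deltaV_eq_psi_deltaW : phiF * deltaV = psiF * deltaW := by
  rw [phiF, deltaV, psiF, deltaW, div_mul_div_comm, div_mul_div_comm,
    div_eq_div_iff (by simp [br_eq_zero_iff]) (by simp [br_eq_zero_iff])]
  ring

end
end
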